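/- arXiv:1711.05072 — 6 statements merged into one kernel-verified Lean document; each statement's English description precedes it below -/
import Mathlib

section
/- Let d ≥ 1, α ∈ (0,1), and let φ : ℝ^d → ℝ be bounded and α-Hölder continuous with Hölder seminorm [φ]_α. Then there is a constant C = C(d,α) > 0 such that for every r > 0 and every i ∈ {1,…,d}, the convolution K(r,·) * φ is differentiable and sup_{x ∈ ℝ^d} |∂_{x_i}(K(r,·) * φ)(x)| ≤ C r^{(α-1)/2} [φ]_α. -/
/-!
Differentiating under the integral sign, `∂ᵢ(K(r,·) * φ)(x₀) = ∫ ∂ᵢK(r, x₀ - y) (φ y - φ x₀) dy`;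
the constant `φ x₀` may be subtracted because `K(r,·) * 1` is constant in `x₀`.
Since `|∇K(r,u)| = |u| K(r,u) / r`, the Hölder bound gives
`|∂ᵢ(K(r,·) * φ)(x₀)| ≤ [φ]_α r⁻¹ ∫ |u|^(1+α) K(r,u) du`, and the substitution `u = √r v`
turns the right-hand side into `[φ]_α r^((α-1)/2) ∫ |v|^(1+α) K(1,v) dv`.
-/

open MeasureTheory Real

noncomputable def heatKernel (d : ℕ) (r : ℝ) (x : EuclideanSpace ℝ (Fin d)) : ℝ :=
  (2 * Real.pi * r) ^ (-(d : ℝ) / 2) * Real.exp (-‖x‖ ^ 2 / (2 * r))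

open Filter Topology

section Holder

variable {E : Type*} [SeminormedAddCommGroup E]

lemma continuous_of_abs_sub_le_mul_rpow {φ : E → ℝ} {M α : ℝ} (hα : 0 < α)
    (h : ∀ x y, |φ x - φ y| ≤ M * ‖x - y‖ ^ α) : Continuous φ := by
  refine continuous_iff_continuousAt.2 fun x => tendsto_iff_dist_tendsto_zero.2 ?_
  have hM : Tendsto (fun z => M * ‖z - x‖ ^ α) (𝓝 x) (𝓝 0) := by
    have : Continuous fun z => M * ‖z - x‖ ^ α :=
      ((continuous_id.sub continuous_const).norm.rpow_const fun _ => Or.inr hα.le).const_mul M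
    have := this.tendsto x
    simpa [Real.zero_rpow hα.ne'] using this
  exact squeeze_zero (fun _ => dist_nonneg) (fun z => h z x) hM

end Holder

section Gaussian

variable {V : Type*} [NormedAddCommGroup V] [InnerProductSpace ℝ V] [FiniteDimensional ℝ V]
  [MeasurableSpace V] [BorelSpace V]

lemma integrable_exp_neg_mul_sq_norm {b : ℝ} (hb : 0 < b) :
    Integrable fun v : V => exp (-b * ‖v‖ ^ 2) := by
  refine (GaussianFourier.integrable_cexp_neg_mul_sq_norm_add (V := V) (b := b)
    (by simpa using hb) 0 0).norm.congr (.of_forall fun v => ?_)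
  simp [Complex.norm_exp, ← Complex.ofReal_pow, ← Complex.ofReal_mul]

lemma integrable_rpow_norm_mul_exp_neg_mul_sq {β b : ℝ} (hβ : 0 ≤ β) (hb : 0 < b) :
    Integrable fun v : V => ‖v‖ ^ β * exp (-b * ‖v‖ ^ 2) := by
  have hcont : Continuous fun v : V => ‖v‖ ^ β * exp (-b * ‖v‖ ^ 2) := by
    fun_prop (disch := exact fun _ => Or.inr hβ)
  refine hcont.locallyIntegrable.integrable_of_isBigO_cocompact
    (g := fun v : V => exp (-(b / 2) * ‖v‖ ^ 2)) ?_
    ((integrable_exp_neg_mul_sq_norm (half_pos hb)).integrableAtFilter _)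
  have hdecay : Tendsto (fun v : V => ‖v‖ ^ β * exp (-(b / 2) * ‖v‖ ^ 2)) (cocompact V) (𝓝 0) := by
    have := (tendsto_rpow_abs_mul_exp_neg_mul_sq_cocompact (half_pos hb) β).comp
      ((tendsto_norm_cocompact_atTop (E := V)).mono_right atTop_le_cocompact)
    simpa only [Function.comp_def, abs_norm] using this
  refine ((hdecay.isBigO_one ℝ).mul (Asymptotics.isBigO_refl _ _)).congr (fun v => ?_)
    (fun v => one_mul _)
  rw [mul_assoc, ← exp_add]; ring_nf

end Gaussian

section HeatKernel

variable {d : ℕ} {r : ℝ}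

lemma heatKernel_eq_mul_exp (x : EuclideanSpace ℝ (Fin d)) :
    heatKernel d r x = (2 * π * r) ^ (-(d : ℝ) / 2) * exp (-(2 * r)⁻¹ * ‖x‖ ^ 2) := by
  rw [heatKernel]; congr 2; ring

lemma heatKernel_nonneg (hr : 0 ≤ r) (x : EuclideanSpace ℝ (Fin d)) : 0 ≤ heatKernel d r x := by
  unfold heatKernel; positivity

lemma integrable_rpow_norm_mul_heatKernel {β : ℝ} (hβ : 0 ≤ β) (hr : 0 < r) :
    Integrable fun x : EuclideanSpace ℝ (Fin d) => ‖x‖ ^ β * heatKernel d r x := by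
  refine ((integrable_rpow_norm_mul_exp_neg_mul_sq hβ (b := (2 * r)⁻¹) (by positivity)).const_mul
    ((2 * π * r) ^ (-(d : ℝ) / 2))).congr (.of_forall fun x => ?_)
  simp only [heatKernel_eq_mul_exp]
  ring

lemma integrable_heatKernel (hr : 0 < r) : Integrable (heatKernel d r) := by
  simpa using integrable_rpow_norm_mul_heatKernel (d := d) le_rfl hr

lemma hasFDerivAt_heatKernel (x : EuclideanSpace ℝ (Fin d)) :
    HasFDerivAt (heatKernel d r) (-(r⁻¹ * heatKernel d r x) • innerSL ℝ x) x := by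
  have hsq : HasFDerivAt (fun x : EuclideanSpace ℝ (Fin d) => ‖x‖ ^ 2) (2 • innerSL ℝ x) x := by
    simpa using (hasFDerivAt_id x).norm_sq
  have := ((hsq.const_mul (-(2 * r)⁻¹)).exp).const_mul ((2 * π * r) ^ (-(d : ℝ) / 2))
  simp_rw [← heatKernel_eq_mul_exp] at this
  refine this.congr_fderiv ?_
  ext v
  simp only [_root_.smul_apply, smul_eq_mul, innerSL_apply_apply, heatKernel_eq_mul_exp]
  ring

lemma norm_fderiv_heatKernel (hr : 0 ≤ r) (x : EuclideanSpace ℝ (Fin d)) :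
    ‖fderiv ℝ (heatKernel d r) x‖ = r⁻¹ * ‖x‖ * heatKernel d r x := by
  rw [(hasFDerivAt_heatKernel x).fderiv, norm_smul, innerSL_apply_norm, norm_neg, Real.norm_eq_abs,
    abs_of_nonneg (by have := heatKernel_nonneg (d := d) hr x; positivity)]
  ring

lemma contDiff_heatKernel {n : WithTop ℕ∞} : ContDiff ℝ n (heatKernel d r) := by
  unfold heatKernel
  have := contDiff_norm_sq ℝ (E := EuclideanSpace ℝ (Fin d)) (n := n)
  fun_prop

lemma heatKernel_sqrt_smul (hr : 0 < r) (v : EuclideanSpace ℝ (Fin d)) :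
    heatKernel d r (√r • v) = r ^ (-(d : ℝ) / 2) * heatKernel d 1 v := by
  have hsq : ‖√r • v‖ ^ 2 = r * ‖v‖ ^ 2 := by
    rw [norm_smul, Real.norm_of_nonneg (sqrt_nonneg r), mul_pow, sq_sqrt hr.le]
  have hexp : -(r * ‖v‖ ^ 2) / (2 * r) = -‖v‖ ^ 2 / (2 * 1) := by field_simp
  rw [heatKernel, heatKernel, hsq, hexp, mul_one, mul_rpow (by positivity) hr.le]
  ring_nf

lemma integral_rpow_norm_mul_heatKernel (hr : 0 < r) (β : ℝ) :
    ∫ x : EuclideanSpace ℝ (Fin d), ‖x‖ ^ β * heatKernel d r x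
      = r ^ (β / 2) * ∫ x : EuclideanSpace ℝ (Fin d), ‖x‖ ^ β * heatKernel d 1 x := by
  have hscale := Measure.integral_comp_smul_of_nonneg volume
    (fun x : EuclideanSpace ℝ (Fin d) => ‖x‖ ^ β * heatKernel d r x) √r (hR := sqrt_nonneg r)
  have hpoint : ∀ v : EuclideanSpace ℝ (Fin d), ‖√r • v‖ ^ β * heatKernel d r (√r • v)
      = r ^ (β / 2) * r ^ (-(d : ℝ) / 2) * (‖v‖ ^ β * heatKernel d 1 v) := by
    intro v
    rw [heatKernel_sqrt_smul hr, norm_smul, Real.norm_of_nonneg (sqrt_nonneg r),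
      mul_rpow (sqrt_nonneg r) (norm_nonneg v), sqrt_eq_rpow, ← rpow_mul hr.le]
    ring_nf
  simp_rw [hpoint, integral_const_mul, finrank_euclideanSpace_fin, smul_eq_mul] at hscale
  rw [eq_inv_mul_iff_mul_eq₀ (by positivity)] at hscale
  have hvol : √r ^ d * r ^ (-(d : ℝ) / 2) = 1 := by
    rw [sqrt_eq_rpow, ← rpow_natCast, ← rpow_mul hr.le, ← rpow_add hr]
    ring_nf
    exact rpow_zero r
  rw [← hscale]
  linear_combination
    (r ^ (β / 2) * ∫ x : EuclideanSpace ℝ (Fin d), ‖x‖ ^ β * heatKernel d 1 x) * hvol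

lemma norm_mul_heatKernel_sub_le (hr : 0 < r) {x₀ z : EuclideanSpace ℝ (Fin d)}
    (hz : ‖z - x₀‖ ≤ 1) (y : EuclideanSpace ℝ (Fin d)) :
    ‖z - y‖ * heatKernel d r (z - y) ≤ (2 * π * r) ^ (-(d : ℝ) / 2) * exp (2 * r)⁻¹ *
      ((‖y - x₀‖ + 1) * exp (-(4 * r)⁻¹ * ‖y - x₀‖ ^ 2)) := by
  have hnear : ‖z - y‖ ≤ ‖y - x₀‖ + 1 := by
    calc ‖z - y‖ ≤ ‖z - x₀‖ + ‖x₀ - y‖ := norm_sub_le_norm_sub_add_norm_sub z x₀ y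
      _ ≤ ‖y - x₀‖ + 1 := by rw [norm_sub_rev x₀ y]; linarith
  have hfar : ‖y - x₀‖ ≤ ‖z - y‖ + 1 := by
    calc ‖y - x₀‖ ≤ ‖y - z‖ + ‖z - x₀‖ := norm_sub_le_norm_sub_add_norm_sub y z x₀
      _ ≤ ‖z - y‖ + 1 := by rw [norm_sub_rev y z]; linarith
  -- `‖y - x₀‖² ≤ 2 ‖z - y‖² + 2` recentres the Gaussian at `x₀`, halving its rate.
  have hgauss : exp (-(2 * r)⁻¹ * ‖z - y‖ ^ 2)
      ≤ exp (2 * r)⁻¹ * exp (-(4 * r)⁻¹ * ‖y - x₀‖ ^ 2) := by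
    rw [← exp_add, exp_le_exp]
    have hsq : ‖y - x₀‖ ^ 2 ≤ 2 * ‖z - y‖ ^ 2 + 2 := by
      nlinarith [pow_le_pow_left₀ (norm_nonneg _) hfar 2, sq_nonneg (‖z - y‖ - 1)]
    have h4r : (4 * r)⁻¹ = (2 * r)⁻¹ / 2 := by field_simp; ring
    rw [h4r]
    nlinarith [inv_pos.2 (by positivity : 0 < 2 * r)]
  rw [heatKernel_eq_mul_exp]
  calc ‖z - y‖ * ((2 * π * r) ^ (-(d : ℝ) / 2) * exp (-(2 * r)⁻¹ * ‖z - y‖ ^ 2))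
      ≤ (‖y - x₀‖ + 1) * ((2 * π * r) ^ (-(d : ℝ) / 2)
          * (exp (2 * r)⁻¹ * exp (-(4 * r)⁻¹ * ‖y - x₀‖ ^ 2))) := by gcongr
    _ = _ := by ring

lemma integrable_heatKernel_sub_mul (hr : 0 < r) {ψ : EuclideanSpace ℝ (Fin d) → ℝ} {B : ℝ}
    (hψ : AEStronglyMeasurable ψ) (hB : ∀ y, |ψ y| ≤ B) (z : EuclideanSpace ℝ (Fin d)) :
    Integrable fun y => heatKernel d r (z - y) * ψ y :=
  ((integrable_heatKernel hr).comp_sub_left z).mul_bdd hψ (.of_forall hB)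

lemma integral_heatKernel_sub_mul_eq_add (hr : 0 < r) {φ : EuclideanSpace ℝ (Fin d) → ℝ} {B : ℝ}
    (hφ : AEStronglyMeasurable φ) (hB : ∀ y, |φ y| ≤ B) (c : ℝ) (z : EuclideanSpace ℝ (Fin d)) :
    ∫ y, heatKernel d r (z - y) * φ y
      = (∫ y, heatKernel d r (z - y) * (φ y - c)) + (∫ u, heatKernel d r u) * c := by
  have hsub : Integrable fun y => heatKernel d r (z - y) * (φ y - c) :=
    integrable_heatKernel_sub_mul hr (hφ.sub aestronglyMeasurable_const)
      (fun y => (abs_sub _ _).trans (add_le_add_left (hB y) _)) z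
  rw [← integral_sub_left_eq_self (heatKernel d r) volume z, ← integral_mul_const,
    ← integral_add hsub (((integrable_heatKernel hr).comp_sub_left z).mul_const _)]
  congr 1 with y
  ring

lemma hasFDerivAt_integral_heatKernel_sub_mul (hr : 0 < r) {ψ : EuclideanSpace ℝ (Fin d) → ℝ}
    {B : ℝ} (hψ : AEStronglyMeasurable ψ) (hB : ∀ y, |ψ y| ≤ B) (x₀ : EuclideanSpace ℝ (Fin d)) :
    HasFDerivAt (fun z => ∫ y, heatKernel d r (z - y) * ψ y)
      (∫ y, ψ y • fderiv ℝ (heatKernel d r) (x₀ - y)) x₀ := by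
  set G : EuclideanSpace ℝ (Fin d) → ℝ :=
    fun w => (‖w‖ ^ (1 : ℝ) + ‖w‖ ^ (0 : ℝ)) * exp (-(4 * r)⁻¹ * ‖w‖ ^ 2)
  have hG : Integrable G := by
    simp only [G, add_mul]
    exact (integrable_rpow_norm_mul_exp_neg_mul_sq zero_le_one (by positivity)).add
      (integrable_rpow_norm_mul_exp_neg_mul_sq le_rfl (by positivity))
  have hB₀ : 0 ≤ B := (abs_nonneg _).trans (hB x₀)
  have hdiff : ∀ y z, HasFDerivAt (fun z => heatKernel d r (z - y) * ψ y)
      (ψ y • fderiv ℝ (heatKernel d r) (z - y)) z := fun y z => by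
    simpa using (((hasFDerivAt_heatKernel (z - y)).differentiableAt.hasFDerivAt.comp z
      ((hasFDerivAt_id z).sub_const y)).mul_const (ψ y))
  refine hasFDerivAt_integral_of_dominated_of_fderiv_le (Metric.closedBall_mem_nhds x₀ one_pos)
    (bound := fun y => B * ((2 * π * r) ^ (-(d : ℝ) / 2) * exp (2 * r)⁻¹ * r⁻¹) * G (y - x₀))
    (.of_forall fun z => ?_) (integrable_heatKernel_sub_mul hr hψ hB x₀) ?_
    (.of_forall fun y z hz => ?_) ((hG.comp_sub_right x₀).const_mul _)
    (.of_forall fun y z _ => hdiff y z)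
  · exact (contDiff_heatKernel (n := 0).continuous.comp
      (continuous_const.sub continuous_id)).aestronglyMeasurable.mul hψ
  · exact hψ.smul ((contDiff_heatKernel (n := 1)).continuous_fderiv one_ne_zero |>.comp
      (continuous_const.sub continuous_id)).aestronglyMeasurable
  · rw [Metric.mem_closedBall, dist_eq_norm] at hz
    calc ‖ψ y • fderiv ℝ (heatKernel d r) (z - y)‖
        = |ψ y| * (r⁻¹ * (‖z - y‖ * heatKernel d r (z - y))) := by
          rw [norm_smul, norm_fderiv_heatKernel hr.le, Real.norm_eq_abs]; ring
      _ ≤ B * (r⁻¹ * ((2 * π * r) ^ (-(d : ℝ) / 2) * exp (2 * r)⁻¹ *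
            ((‖y - x₀‖ + 1) * exp (-(4 * r)⁻¹ * ‖y - x₀‖ ^ 2)))) := by
          have := heatKernel_nonneg (d := d) hr.le (z - y)
          exact mul_le_mul (hB y) (mul_le_mul_of_nonneg_left (norm_mul_heatKernel_sub_le hr hz y)
            (by positivity)) (by positivity) hB₀
      _ = _ := by simp only [G, rpow_one, rpow_zero]; ring

lemma norm_integral_smul_fderiv_heatKernel_le (hr : 0 < r) {ψ : EuclideanSpace ℝ (Fin d) → ℝ}
    {M α : ℝ} (hα : 0 ≤ α) (x₀ : EuclideanSpace ℝ (Fin d))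
    (hψ : ∀ y, |ψ y| ≤ M * ‖y - x₀‖ ^ α) :
    ‖∫ y, ψ y • fderiv ℝ (heatKernel d r) (x₀ - y)‖
      ≤ M * r ^ ((α - 1) / 2) *
          ∫ x : EuclideanSpace ℝ (Fin d), ‖x‖ ^ (α + 1) * heatKernel d 1 x := by
  have hpoint : ∀ y, ‖ψ y • fderiv ℝ (heatKernel d r) (x₀ - y)‖
      ≤ M * r⁻¹ * (‖x₀ - y‖ ^ (α + 1) * heatKernel d r (x₀ - y)) := fun y => by
    have := heatKernel_nonneg (d := d) hr.le (x₀ - y)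
    rw [norm_smul, norm_fderiv_heatKernel hr.le, Real.norm_eq_abs,
      rpow_add_one' (norm_nonneg _) (by linarith), norm_sub_rev x₀ y]
    calc |ψ y| * (r⁻¹ * ‖y - x₀‖ * heatKernel d r (x₀ - y))
        ≤ M * ‖y - x₀‖ ^ α * (r⁻¹ * ‖y - x₀‖ * heatKernel d r (x₀ - y)) :=
          mul_le_mul_of_nonneg_right (hψ y) (by positivity)
      _ = _ := by ring
  calc _ ≤ ∫ y, M * r⁻¹ * (‖x₀ - y‖ ^ (α + 1) * heatKernel d r (x₀ - y)) :=
        norm_integral_le_of_norm_le (((integrable_rpow_norm_mul_heatKernel (by linarith)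
          hr).comp_sub_left x₀).const_mul _) (.of_forall hpoint)
    _ = M * r⁻¹ * ∫ x : EuclideanSpace ℝ (Fin d), ‖x‖ ^ (α + 1) * heatKernel d r x := by
        rw [integral_const_mul,
          integral_sub_left_eq_self (fun x => ‖x‖ ^ (α + 1) * heatKernel d r x)]
    _ = _ := by
        have hpow : r⁻¹ * r ^ ((α + 1) / 2) = r ^ ((α - 1) / 2) := by
          rw [← rpow_neg_one, ← rpow_add hr]
          ring_nf
        rw [integral_rpow_norm_mul_heatKernel hr, ← hpow]
        ring

end HeatKernel

theorem stmt_0_general (d : ℕ) (α : ℝ) (hα : α ∈ Set.Ioo (0 : ℝ) 1) :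
    ∃ C : ℝ, 0 < C ∧
      ∀ (φ : EuclideanSpace ℝ (Fin d) → ℝ) (M : ℝ), 0 ≤ M →
        (∃ B : ℝ, ∀ x, |φ x| ≤ B) →
        (∀ x y, |φ x - φ y| ≤ M * ‖x - y‖ ^ α) →
        ∀ r : ℝ, 0 < r → ∀ i : Fin d, ∀ x : EuclideanSpace ℝ (Fin d),
          DifferentiableAt ℝ (fun z => ∫ y, heatKernel d r (z - y) * φ y) x ∧
          |fderiv ℝ (fun z => ∫ y, heatKernel d r (z - y) * φ y) x
              (EuclideanSpace.single i 1)| ≤ C * r ^ ((α - 1) / 2) * M := by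
  set J := ∫ x : EuclideanSpace ℝ (Fin d), ‖x‖ ^ (α + 1) * heatKernel d 1 x
  have hJ : 0 ≤ J :=
    integral_nonneg fun x => mul_nonneg (by positivity) (heatKernel_nonneg zero_le_one x)
  refine ⟨1 + J, by positivity, fun φ M hM ⟨B, hB⟩ hφ r hr i x₀ => ?_⟩
  have hφ_meas : AEStronglyMeasurable φ :=
    (continuous_of_abs_sub_le_mul_rpow hα.1 hφ).aestronglyMeasurable
  have hD : HasFDerivAt (fun z => ∫ y, heatKernel d r (z - y) * φ y)
      (∫ y, (φ y - φ x₀) • fderiv ℝ (heatKernel d r) (x₀ - y)) x₀ := by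
    simp_rw [integral_heatKernel_sub_mul_eq_add hr hφ_meas hB (φ x₀)]
    exact (hasFDerivAt_integral_heatKernel_sub_mul hr (hφ_meas.sub aestronglyMeasurable_const)
      (fun y => (abs_sub _ _).trans (add_le_add_left (hB y) _)) x₀).add_const _
  refine ⟨hD.differentiableAt, ?_⟩
  have hr' : 0 < r ^ ((α - 1) / 2) := rpow_pos_of_pos hr _
  calc _ ≤ ‖∫ y, (φ y - φ x₀) • fderiv ℝ (heatKernel d r) (x₀ - y)‖ := by
        simpa [hD.fderiv] using (∫ y, (φ y - φ x₀) • fderiv ℝ (heatKernel d r) (x₀ - y)).le_opNorm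
          (EuclideanSpace.single i (1 : ℝ))
    _ ≤ M * r ^ ((α - 1) / 2) * J :=
        norm_integral_smul_fderiv_heatKernel_le hr hα.1.le x₀ fun y => hφ y x₀
    _ ≤ (1 + J) * r ^ ((α - 1) / 2) * M := by nlinarith [mul_nonneg hr'.le hM]

/-- First-derivative bound for the heat semigroup acting on a bounded `α`-Hölder function:
`sup_x |∂_{x_i} (K(r,·) * φ)(x)| ≤ C r^{(α-1)/2} [φ]_α`. -/
theorem stmt_0 (d : ℕ) (hd : 1 ≤ d) (α : ℝ) (hα : α ∈ Set.Ioo (0 : ℝ) 1) :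
    ∃ C : ℝ, 0 < C ∧
      ∀ (φ : EuclideanSpace ℝ (Fin d) → ℝ) (M : ℝ), 0 ≤ M →
        (∃ B : ℝ, ∀ x, |φ x| ≤ B) →
        (∀ x y, |φ x - φ y| ≤ M * ‖x - y‖ ^ α) →
        ∀ r : ℝ, 0 < r → ∀ i : Fin d, ∀ x : EuclideanSpace ℝ (Fin d),
          DifferentiableAt ℝ (fun z => ∫ y, heatKernel d r (z - y) * φ y) x ∧
          |fderiv ℝ (fun z => ∫ y, heatKernel d r (z - y) * φ y) x
              (EuclideanSpace.single i 1)| ≤ C * r ^ ((α - 1) / 2) * M :=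
  stmt_0_general d α hα
end

section
/- Let d ≥ 1, q ∈ (2,∞), q' = q/(q−1). Then there exists a constant C = C(d,q) > 0 such that for all x, y ∈ ℝ^d with δ := |x−y| > 0, the surface integral over the sphere of radius 2δ centered at x satisfies ∫_{{z : |x−z| = 2δ}} ( ∫_0^∞ r^{-(d+1)q'/2} e^{-q' |y−z|^2/(2r)} dr )^{1/q'} dS(z) ≤ C δ^{-2/q}, where dS denotes the (d−1)-dimensional surface measure on the sphere. -/
/-!
For `z` on the sphere `|x - z| = 2δ` we have `|y - z| ≥ δ`. The substitution `r ↦ |y - z|² r`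
shows that the inner integral equals `|y - z|^(2(e+1))` times a constant, where
`e = -(d+1)q'/2 < -1`, so the integrand is at most a constant times `δ^(2(e+1)/q')`.
The sphere of radius `2δ` has `(d-1)`-dimensional Hausdorff measure `(2δ)^(d-1)` times that of
the unit sphere, which is finite: by compactness the unit sphere is covered by finitely many
Lipschitz images of balls in `(d-1)`-dimensional hyperplanes. The exponents add up to `-2/q`.
-/

open MeasureTheory Real Metric Module Set
open scoped Pointwise ENNReal NNReal RealInnerProductSpace

lemma lipschitzOnWith_inv_norm_smul {F : Type*} [NormedAddCommGroup F] [NormedSpace ℝ F] :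
    LipschitzOnWith 2 (fun u : F => ‖u‖⁻¹ • u) {u | 1 ≤ ‖u‖} := by
  refine LipschitzOnWith.of_dist_le_mul fun u (hu : 1 ≤ ‖u‖) u' (hu' : 1 ≤ ‖u'‖) => ?_
  have hu0 : 0 < ‖u‖ := by linarith
  have hu'0 : 0 < ‖u'‖ := by linarith
  have hsplit : ‖u‖⁻¹ • u - ‖u'‖⁻¹ • u' = ‖u‖⁻¹ • (u - u') + (‖u‖⁻¹ - ‖u'‖⁻¹) • u' := by
    module
  have hcoef : ‖‖u‖⁻¹ - ‖u'‖⁻¹‖ * ‖u'‖ = |‖u'‖ - ‖u‖| / ‖u‖ := by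
    rw [Real.norm_eq_abs, inv_sub_inv hu0.ne' hu'0.ne', abs_div, abs_of_pos (mul_pos hu0 hu'0)]
    field_simp
  rw [dist_eq_norm, dist_eq_norm, hsplit]
  calc ‖‖u‖⁻¹ • (u - u') + (‖u‖⁻¹ - ‖u'‖⁻¹) • u'‖
      ≤ ‖u - u'‖ / ‖u‖ + |‖u'‖ - ‖u‖| / ‖u‖ := by
        refine (norm_add_le _ _).trans_eq ?_
        rw [norm_smul, norm_smul, ← hcoef, norm_inv, norm_norm, inv_mul_eq_div]
    _ ≤ ‖u - u'‖ + ‖u - u'‖ := by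
        rw [abs_sub_comm]
        gcongr
        · exact div_le_self (norm_nonneg _) hu
        · exact div_le_self (abs_nonneg _) hu |>.trans (abs_norm_sub_norm_le u u')
    _ = (2 : ℝ≥0) * ‖u - u'‖ := by push_cast; ring

section UnitSphere

variable {E : Type*} [NormedAddCommGroup E] [InnerProductSpace ℝ E]

/-- Central projection of the tangent hyperplane `v + vᗮ` onto the unit sphere. -/
noncomputable def tangentRadialProj (v : E) (w : (ℝ ∙ v)ᗮ) : E := ‖(w : E) + v‖⁻¹ • ((w : E) + v)

lemma lipschitzWith_tangentRadialProj {v : E} (hv : ‖v‖ = 1) :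
    LipschitzWith 2 (tangentRadialProj v) := by
  have hmaps : MapsTo (fun w : (ℝ ∙ v)ᗮ => (w : E) + v) univ {u | 1 ≤ ‖u‖} := by
    intro w _
    have hwv : ⟪(w : E), v⟫ = 0 := Submodule.mem_orthogonal_singleton_iff_inner_left.1 w.2
    have := norm_add_sq_eq_norm_sq_add_norm_sq_of_inner_eq_zero (w : E) v hwv
    show 1 ≤ ‖(w : E) + v‖
    nlinarith [norm_nonneg ((w : E) + v), sq_nonneg ‖(w : E)‖]
  have hshift : LipschitzWith 1 (fun w : (ℝ ∙ v)ᗮ => (w : E) + v) :=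
    LipschitzWith.of_dist_le_mul fun w w' => by simp [dist_eq_norm]
  have h := lipschitzOnWith_univ.1 (lipschitzOnWith_inv_norm_smul.comp hshift.lipschitzOnWith hmaps)
  rw [mul_one] at h
  exact h

lemma sphere_inter_half_lt_inner_subset {v : E} (hv : ‖v‖ = 1) :
    sphere (0 : E) 1 ∩ {z | 1 / 2 < ⟪z, v⟫} ⊆ tangentRadialProj v '' closedBall 0 3 := by
  rintro z ⟨hz, ht : 1 / 2 < ⟪z, v⟫⟩
  rw [mem_sphere_zero_iff_norm] at hz
  set t := ⟪z, v⟫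
  have ht0 : 0 < t := by linarith
  have hw : t⁻¹ • z - v ∈ (ℝ ∙ v)ᗮ := by
    rw [Submodule.mem_orthogonal_singleton_iff_inner_right, inner_sub_right, inner_smul_right,
      real_inner_comm, real_inner_self_eq_norm_sq, hv]
    field_simp
    ring
  refine ⟨⟨_, hw⟩, ?_, ?_⟩
  · rw [mem_closedBall_zero_iff, Submodule.coe_norm]
    calc ‖t⁻¹ • z - v‖ ≤ ‖t⁻¹ • z‖ + ‖v‖ := norm_sub_le _ _
      _ ≤ 3 := by
        rw [norm_smul, hz, hv, norm_inv, Real.norm_of_nonneg ht0.le, mul_one]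
        linarith [(inv_lt_comm₀ ht0 two_pos).2 (by linarith)]
  · simp only [tangentRadialProj, sub_add_cancel, norm_smul, hz, norm_inv,
      Real.norm_of_nonneg ht0.le, mul_one, inv_inv, smul_smul, mul_inv_cancel₀ ht0.ne', one_smul]

variable [FiniteDimensional ℝ E] [MeasurableSpace E] [BorelSpace E]

lemma hausdorffMeasure_tangentRadialProj_image_lt_top {n : ℕ} [Fact (finrank ℝ E = n + 1)]
    {v : E} (hv : ‖v‖ = 1) : μH[n] (tangentRadialProj v '' closedBall 0 3) < ∞ := by
  have : BorelSpace (ℝ ∙ v)ᗮ := Subtype.borelSpace _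
  have hrank : finrank ℝ (ℝ ∙ v)ᗮ = n :=
    Submodule.finrank_orthogonal_span_singleton (norm_ne_zero_iff.1 (hv ▸ one_ne_zero))
  refine ((lipschitzWith_tangentRadialProj hv).hausdorffMeasure_image_le n.cast_nonneg _).trans_lt ?_
  refine ENNReal.mul_lt_top (ENNReal.rpow_lt_top_of_nonneg n.cast_nonneg ENNReal.coe_ne_top) ?_
  rw [← hrank]
  exact (isCompact_closedBall _ _).measure_lt_top

theorem hausdorffMeasure_sphere_lt_top {n : ℕ} [Fact (finrank ℝ E = n + 1)] :
    μH[n] (sphere (0 : E) 1) < ∞ := by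
  obtain ⟨t, ht, hcover⟩ := (isCompact_sphere (0 : E) 1).elim_nhds_subcover
    (fun v => {z | 1 / 2 < ⟪z, v⟫}) fun v hv => by
      refine (isOpen_lt continuous_const (continuous_id.inner continuous_const)).mem_nhds ?_
      rw [mem_sphere_zero_iff_norm] at hv
      show 1 / 2 < ⟪v, v⟫
      rw [real_inner_self_eq_norm_sq, hv]
      norm_num
  have hsub : sphere (0 : E) 1 ⊆ ⋃ v ∈ t, tangentRadialProj v '' closedBall 0 3 := by
    intro z hz
    obtain ⟨v, hvt, hzv⟩ := mem_iUnion₂.1 (hcover hz)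
    exact mem_biUnion hvt <|
      sphere_inter_half_lt_inner_subset (mem_sphere_zero_iff_norm.1 (ht v hvt)) ⟨hz, hzv⟩
  refine (measure_mono hsub).trans_lt <| (measure_biUnion_finset_le _ _).trans_lt ?_
  exact ENNReal.sum_lt_top.2 fun v hv =>
    hausdorffMeasure_tangentRadialProj_image_lt_top (mem_sphere_zero_iff_norm.1 (ht v hv))

end UnitSphere

lemma hausdorffMeasure_sphere {F : Type*} [NormedAddCommGroup F] [NormedSpace ℝ F]
    [MeasurableSpace F] [BorelSpace F] {s : ℝ} (hs : 0 ≤ s) (x : F) {r : ℝ} (hr : 0 < r) :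
    μH[s] (sphere x r) = ENNReal.ofReal (r ^ s) * μH[s] (sphere (0 : F) 1) := by
  have hsphere : sphere x r = x +ᵥ r • sphere (0 : F) 1 := by
    rw [smul_sphere' hr.ne', vadd_sphere, smul_zero, vadd_eq_add, add_zero,
      Real.norm_of_nonneg hr.le, mul_one]
  rw [hsphere, measure_vadd, Measure.hausdorffMeasure_smul₀ hs hr.ne', ENNReal.smul_def,
    smul_eq_mul, ← ENNReal.ofReal_coe_nnreal, NNReal.coe_rpow, coe_nnnorm, Real.norm_of_nonneg hr.le]

lemma setIntegral_sphere_le_of_norm_le {F : Type*} [NormedAddCommGroup F] [NormedSpace ℝ F]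
    [MeasurableSpace F] [BorelSpace F] {s : ℝ} (hs : 0 ≤ s)
    (hfin : μH[s] (sphere (0 : F) 1) < ∞) (x : F) {r : ℝ} (hr : 0 < r) {f : F → ℝ} {M : ℝ}
    (hf : ∀ z ∈ sphere x r, ‖f z‖ ≤ M) :
    ∫ z in sphere x r, f z ∂μH[s] ≤ M * (r ^ s * (μH[s] (sphere (0 : F) 1)).toReal) := by
  have hμ := hausdorffMeasure_sphere hs x hr
  calc _ ≤ M * μH[s].real (sphere x r) := (le_abs_self _).trans <|
        norm_setIntegral_le_of_norm_le_const (hμ ▸ ENNReal.mul_lt_top ENNReal.ofReal_lt_top hfin) hf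
    _ = _ := by
      rw [measureReal_def, hμ, ENNReal.toReal_mul, ENNReal.toReal_ofReal (by positivity)]

lemma integral_Ioi_rpow_mul_exp_scale (e a : ℝ) {b : ℝ} (hb : 0 < b) :
    ∫ r in Ioi 0, r ^ e * exp (-(a * b) / (2 * r)) =
      b ^ (e + 1) * ∫ r in Ioi 0, r ^ e * exp (-a / (2 * r)) := by
  have h := integral_comp_mul_left_Ioi (fun r => r ^ e * exp (-(a * b) / (2 * r))) 0 hb
  rw [mul_zero, smul_eq_mul] at h
  have hsubst : ∫ r in Ioi 0, (b * r) ^ e * exp (-(a * b) / (2 * (b * r))) =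
      b ^ e * ∫ r in Ioi 0, r ^ e * exp (-a / (2 * r)) := by
    rw [← integral_const_mul]
    refine setIntegral_congr_fun measurableSet_Ioi fun r (hr : 0 < r) => ?_
    have hexp : -(a * b) / (2 * (b * r)) = -a / (2 * r) := by field_simp
    rw [mul_rpow hb.le hr.le, hexp, mul_assoc]
  rw [hsubst] at h
  rw [rpow_add_one hb.ne', mul_right_comm, h]
  field_simp

lemma integral_Ioi_rpow_mul_exp_le (a : ℝ) {e δ ρ : ℝ} (he : e + 1 ≤ 0) (hδ : 0 < δ)
    (hδρ : δ ≤ ρ) :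
    ∫ r in Ioi 0, r ^ e * exp (-(a * ρ ^ 2) / (2 * r)) ≤
      δ ^ (2 * (e + 1)) * ∫ r in Ioi 0, r ^ e * exp (-a / (2 * r)) := by
  have hsq (t : ℝ) (ht : 0 ≤ t) : (t ^ 2) ^ (e + 1) = t ^ (2 * (e + 1)) := by
    rw [← rpow_natCast, ← rpow_mul ht, Nat.cast_ofNat]
  rw [integral_Ioi_rpow_mul_exp_scale e a (pow_pos (hδ.trans_le hδρ) 2), hsq ρ (hδ.le.trans hδρ)]
  gcongr ?_ * _
  · exact setIntegral_nonneg measurableSet_Ioi fun r (hr : 0 < r) => by positivity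
  · exact rpow_le_rpow_of_nonpos hδ hδρ (by linarith)

lemma dist_le_dist_of_mem_sphere_two_mul {X : Type*} [PseudoMetricSpace X] {x y z : X}
    (hz : z ∈ sphere x (2 * dist x y)) : dist x y ≤ dist y z := by
  rw [mem_sphere, dist_comm] at hz
  linarith [dist_triangle x y z]

/-- Surface-integral estimate: for `q' = q/(q-1)` and `δ = |x-y| > 0`,
`∫_{|x-z|=2δ} (∫_0^∞ r^{-(d+1)q'/2} e^{-q'|y-z|²/(2r)} dr)^{1/q'} dS(z) ≤ C δ^{-2/q}`,
the surface measure being the `(d-1)`-dimensional Hausdorff measure on the sphere. -/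
theorem stmt_7 (d : ℕ) (hd : 1 ≤ d) (q : ℝ) (hq : 2 < q) :
    ∃ C : ℝ, 0 < C ∧
      ∀ x y : EuclideanSpace ℝ (Fin d), x ≠ y →
        ∫ z in Metric.sphere x (2 * ‖x - y‖),
          (∫ r in Set.Ioi (0 : ℝ),
              r ^ (-(((d : ℝ) + 1) * (q / (q - 1))) / 2) *
                Real.exp (-((q / (q - 1)) * ‖y - z‖ ^ 2) / (2 * r))) ^ (1 / (q / (q - 1)))
            ∂(μH[(d : ℝ) - 1])
        ≤ C * ‖x - y‖ ^ (-(2 / q)) := by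
  obtain ⟨n, rfl⟩ : ∃ n, d = n + 1 := ⟨d - 1, by omega⟩
  have : Fact (finrank ℝ (EuclideanSpace ℝ (Fin (n + 1))) = n + 1) := ⟨finrank_euclideanSpace_fin⟩
  have hdim : ((n + 1 : ℕ) : ℝ) - 1 = n := by push_cast; ring
  rw [hdim]
  set q' := q / (q - 1) with hq'
  have hq'1 : 1 < q' := by rw [hq', one_lt_div] <;> linarith
  set e := -(((n + 1 : ℕ) + 1) * q') / 2 with he
  have he1 : e + 1 ≤ 0 := by
    rw [he]; push_cast
    nlinarith [(n.cast_nonneg : (0 : ℝ) ≤ n)]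
  have hexp : 2 * (e + 1) * (1 / q') + n = -(2 / q) := by
    have hq1 : q - 1 ≠ 0 := by linarith
    rw [he, hq']
    push_cast
    field_simp
    ring
  set B := ∫ r in Ioi 0, r ^ e * exp (-q' / (2 * r))
  have hB : 0 ≤ B := setIntegral_nonneg measurableSet_Ioi fun r (hr : 0 < r) => by positivity
  set A := μH[n] (sphere (0 : EuclideanSpace ℝ (Fin (n + 1))) 1)
  refine ⟨B ^ (1 / q') * 2 ^ (n : ℝ) * A.toReal + 1, by positivity, fun x y hxy => ?_⟩
  rw [← dist_eq_norm]
  set δ := dist x y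
  have hδ : 0 < δ := dist_pos.2 hxy
  have hpt : ∀ z ∈ sphere x (2 * δ),
      ‖(∫ r in Ioi 0, r ^ e * exp (-(q' * ‖y - z‖ ^ 2) / (2 * r))) ^ (1 / q')‖ ≤
        (δ ^ (2 * (e + 1)) * B) ^ (1 / q') := by
    intro z hz
    have hI := integral_Ioi_rpow_mul_exp_le q' he1 hδ
      ((dist_le_dist_of_mem_sphere_two_mul hz).trans_eq (dist_eq_norm y z))
    have hI0 : 0 ≤ ∫ r in Ioi 0, r ^ e * exp (-(q' * ‖y - z‖ ^ 2) / (2 * r)) :=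
      setIntegral_nonneg measurableSet_Ioi fun r (hr : 0 < r) => by positivity
    rw [Real.norm_of_nonneg (by positivity)]
    gcongr
  calc _ ≤ (δ ^ (2 * (e + 1)) * B) ^ (1 / q') * ((2 * δ) ^ (n : ℝ) * A.toReal) :=
        setIntegral_sphere_le_of_norm_le n.cast_nonneg hausdorffMeasure_sphere_lt_top x
          (by positivity) hpt
    _ = B ^ (1 / q') * 2 ^ (n : ℝ) * A.toReal * δ ^ (-(2 / q)) := by
        rw [mul_rpow (by positivity) hB, mul_rpow zero_le_two hδ.le, ← rpow_mul hδ.le, ← hexp,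
          rpow_add hδ]
        ring
    _ ≤ _ := by gcongr; linarith
end

section
/- Let d ≥ 1. There exists a constant C = C(d) > 0 such that for every r > 0, every i ∈ {1,…,d}, and all x, y, z ∈ ℝ^d with |x−z| > 2|x−y|, the second derivatives of the Gaussian heat kernel satisfy |∂^2_{x_i} K(r, x−z) − ∂^2_{x_i} K(r, y−z)| ≤ C |x−y| r^{-(d+3)/2} e^{-|x−z|^2/(16 r)}. -/
/-!
The pure second derivative of `K(r, ·)` in a direction `v` is
`K(r, w) (⟪v, w⟫² / r² - ‖v‖² / r)`, and the norm of its gradient is at most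
`K(r, w) ‖v‖² (3‖w‖ / r² + ‖w‖³ / r³)`. Spending half of the Gaussian factor, this is at most
`128 ‖v‖² r^{-(d+3)/2} e^{-‖w‖²/(4r)}`, because `(3t + t³) e^{-t²/4} ≤ 128` for
`t = ‖w‖ / √r`. Every point `w` of the closed ball of radius `‖x - y‖` about `x - z` satisfies
`‖x - z‖ ≤ 2‖w‖`, so `e^{-‖w‖²/(4r)} ≤ e^{-‖x-z‖²/(16r)}` there, and the mean value
inequality on that ball gives the estimate with `C = 128`.
-/

open MeasureTheory Real

open scoped RealInnerProductSpace

theorem cubic_mul_exp_neg_sq_le (t : ℝ) : (3 * t + t ^ 3) * exp (-t ^ 2 / 4) ≤ 128 := by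
  have hexp : (1 + t ^ 2 / 8) ^ 2 ≤ exp (t ^ 2 / 4) := by
    calc (1 + t ^ 2 / 8) ^ 2 ≤ exp (t ^ 2 / 8) ^ 2 := by
          gcongr
          linarith [add_one_le_exp (t ^ 2 / 8)]
      _ = exp (t ^ 2 / 4) := by rw [← exp_nat_mul]; ring_nf
  have hcubic : 3 * t + t ^ 3 ≤ 128 * (1 + t ^ 2 / 8) ^ 2 := by
    nlinarith [sq_nonneg (t - 1), sq_nonneg (t ^ 2 - t), sq_nonneg (t ^ 2 - 1)]
  calc (3 * t + t ^ 3) * exp (-t ^ 2 / 4) ≤ 128 * exp (t ^ 2 / 4) * exp (-t ^ 2 / 4) := by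
        gcongr
        linarith
    _ = 128 := by rw [mul_assoc, ← exp_add, neg_div, add_neg_cancel, exp_zero, mul_one]

theorem sq_rpow_neg_three_halves {u : ℝ} (hu : 0 ≤ u) :
    (u ^ 2) ^ (-(3 : ℝ) / 2) = (u ^ 3)⁻¹ := by
  rw [← rpow_natCast u 2, ← rpow_mul hu, ← rpow_natCast u 3, ← rpow_neg hu]
  norm_num

theorem polynomial_mul_exp_le {r : ℝ} (hr : 0 < r) (s : ℝ) :
    (3 * s / r ^ 2 + s ^ 3 / r ^ 3) * exp (-s ^ 2 / (2 * r)) ≤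
      128 * r ^ (-(3 : ℝ) / 2) * exp (-s ^ 2 / (4 * r)) := by
  obtain ⟨u, hu, rfl⟩ : ∃ u, 0 < u ∧ r = u ^ 2 := ⟨√r, sqrt_pos.mpr hr, (sq_sqrt hr.le).symm⟩
  have hsplit :
      exp (-s ^ 2 / (2 * u ^ 2)) = exp (-(s / u) ^ 2 / 4) * exp (-s ^ 2 / (4 * u ^ 2)) := by
    rw [← exp_add]; congr 1; field_simp; ring
  have hscale : 3 * s / (u ^ 2) ^ 2 + s ^ 3 / (u ^ 2) ^ 3 =
      (u ^ 2) ^ (-(3 : ℝ) / 2) * (3 * (s / u) + (s / u) ^ 3) := by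
    rw [sq_rpow_neg_three_halves hu.le]; field_simp
  rw [hsplit, hscale]
  calc _ = (u ^ 2) ^ (-(3 : ℝ) / 2) *
          ((3 * (s / u) + (s / u) ^ 3) * exp (-(s / u) ^ 2 / 4)) * exp (-s ^ 2 / (4 * u ^ 2)) := by
        ring
    _ ≤ (u ^ 2) ^ (-(3 : ℝ) / 2) * 128 * exp (-s ^ 2 / (4 * u ^ 2)) := by
        gcongr
        exact cubic_mul_exp_neg_sq_le (s / u)
    _ = _ := by ring

section HeatKernel

variable {d : ℕ}

theorem heatKernel_pos {r : ℝ} (hr : 0 < r) (w : EuclideanSpace ℝ (Fin d)) :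
    0 < heatKernel d r w := by
  unfold heatKernel
  positivity

noncomputable def heatKernelSecondDeriv (d : ℕ) (r : ℝ) (v w : EuclideanSpace ℝ (Fin d)) : ℝ :=
  heatKernel d r w * (⟪v, w⟫ ^ 2 / r ^ 2 - ‖v‖ ^ 2 / r)

section Derivatives

variable (r : ℝ) (v w : EuclideanSpace ℝ (Fin d))

theorem hasFDerivAt_heatKernel_s8 :
    HasFDerivAt (heatKernel d r) (-(heatKernel d r w / r) • innerSL ℝ w) w := by
  have h := (((hasStrictFDerivAt_norm_sq w).hasFDerivAt.neg.mul_const (2 * r)⁻¹).exp).const_mul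
    ((2 * π * r) ^ (-(d : ℝ) / 2))
  simp only [← div_eq_mul_inv] at h
  refine h.congr_fderiv ?_
  ext u
  simp [heatKernel, two_smul]
  ring

theorem fderiv_heatKernel_apply :
    fderiv ℝ (heatKernel d r) w v = -(heatKernel d r w / r) * ⟪w, v⟫ := by
  simp [(hasFDerivAt_heatKernel_s8 r w).fderiv]

theorem fderiv_fderiv_heatKernel_apply :
    fderiv ℝ (fun w => fderiv ℝ (heatKernel d r) w v) w v = heatKernelSecondDeriv d r v w := by
  have h :=
    ((hasFDerivAt_heatKernel_s8 r w).mul_const (-r⁻¹)).mul ((innerSL ℝ v).hasFDerivAt (x := w))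
  simp only [fderiv_heatKernel_apply]
  rw [(h.congr_of_eventuallyEq (.of_forall fun x => ?_)).fderiv]
  · simp [heatKernelSecondDeriv, real_inner_comm]
    ring
  · simp only [Pi.mul_apply, innerSL_apply_apply, real_inner_comm v]
    ring

theorem hasFDerivAt_heatKernelSecondDeriv :
    HasFDerivAt (heatKernelSecondDeriv d r v)
      ((-(heatKernelSecondDeriv d r v w / r)) • innerSL ℝ w
        + (2 * heatKernel d r w * ⟪v, w⟫ / r ^ 2) • innerSL ℝ v) w := by
  have hq := (innerSL ℝ v).hasFDerivAt (x := w)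
  have h := (hasFDerivAt_heatKernel_s8 r w).mul
    (((hq.pow 2).mul_const (r ^ 2)⁻¹).sub_const (‖v‖ ^ 2 / r))
  refine (h.congr_fderiv ?_).congr_of_eventuallyEq (.of_forall fun x => ?_)
  · ext u
    simp [heatKernelSecondDeriv]
    ring
  · simp only [heatKernelSecondDeriv, Pi.mul_apply, innerSL_apply_apply]
    ring

end Derivatives

section Bounds

variable {r : ℝ}

theorem abs_heatKernelSecondDeriv_le (hr : 0 < r) (v w : EuclideanSpace ℝ (Fin d)) :
    |heatKernelSecondDeriv d r v w| ≤
      heatKernel d r w * ‖v‖ ^ 2 * (‖w‖ ^ 2 / r ^ 2 + 1 / r) := by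
  have hvw : ⟪v, w⟫ ^ 2 ≤ (‖v‖ * ‖w‖) ^ 2 := sq_le_sq.mpr <| by
    simpa [abs_mul] using abs_real_inner_le_norm v w
  rw [heatKernelSecondDeriv, abs_mul, abs_of_pos (heatKernel_pos hr w), mul_assoc]
  refine mul_le_mul_of_nonneg_left ?_ (heatKernel_pos hr w).le
  calc |⟪v, w⟫ ^ 2 / r ^ 2 - ‖v‖ ^ 2 / r| ≤ ⟪v, w⟫ ^ 2 / r ^ 2 + ‖v‖ ^ 2 / r := by
        refine (abs_sub _ _).trans_eq ?_
        rw [abs_of_nonneg (by positivity), abs_of_nonneg (by positivity)]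
    _ ≤ (‖v‖ * ‖w‖) ^ 2 / r ^ 2 + ‖v‖ ^ 2 / r := by gcongr
    _ = ‖v‖ ^ 2 * (‖w‖ ^ 2 / r ^ 2 + 1 / r) := by ring

theorem norm_fderiv_heatKernelSecondDeriv_le (hr : 0 < r) (v w : EuclideanSpace ℝ (Fin d)) :
    ‖fderiv ℝ (heatKernelSecondDeriv d r v) w‖ ≤
      heatKernel d r w * ‖v‖ ^ 2 * (3 * ‖w‖ / r ^ 2 + ‖w‖ ^ 3 / r ^ 3) := by
  rw [(hasFDerivAt_heatKernelSecondDeriv r v w).fderiv]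
  have hK := heatKernel_pos hr w
  calc _ ≤ |heatKernelSecondDeriv d r v w| / r * ‖w‖
          + 2 * heatKernel d r w * |⟪v, w⟫| / r ^ 2 * ‖v‖ := by
        refine (norm_add_le _ _).trans_eq ?_
        simp only [norm_smul, innerSL_apply_norm, norm_neg, norm_div, norm_mul, norm_pow,
          Real.norm_eq_abs, abs_of_pos hr, abs_of_pos hK, abs_two]
    _ ≤ heatKernel d r w * ‖v‖ ^ 2 * (‖w‖ ^ 2 / r ^ 2 + 1 / r) / r * ‖w‖
          + 2 * heatKernel d r w * (‖v‖ * ‖w‖) / r ^ 2 * ‖v‖ := by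
        gcongr
        · exact abs_heatKernelSecondDeriv_le hr v w
        · exact abs_real_inner_le_norm v w
    _ = _ := by
        field_simp
        ring

theorem heatKernel_le (hr : 0 < r) (w : EuclideanSpace ℝ (Fin d)) :
    heatKernel d r w ≤ r ^ (-(d : ℝ) / 2) * exp (-‖w‖ ^ 2 / (2 * r)) := by
  have h2π : (2 * π) ^ (-(d : ℝ) / 2) ≤ 1 :=
    rpow_le_one_of_one_le_of_nonpos (by linarith [pi_gt_three])
      (by linarith [(d.cast_nonneg : (0 : ℝ) ≤ d)])
  rw [heatKernel, mul_rpow (by positivity) hr.le]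
  gcongr
  exact mul_le_of_le_one_left (by positivity) h2π

theorem heatKernel_mul_polynomial_le (hr : 0 < r) (w : EuclideanSpace ℝ (Fin d)) :
    heatKernel d r w * (3 * ‖w‖ / r ^ 2 + ‖w‖ ^ 3 / r ^ 3) ≤
      128 * r ^ (-((d : ℝ) + 3) / 2) * exp (-‖w‖ ^ 2 / (4 * r)) := by
  have hsplit : r ^ (-((d : ℝ) + 3) / 2) = r ^ (-(d : ℝ) / 2) * r ^ (-(3 : ℝ) / 2) := by
    rw [← rpow_add hr]; ring_nf
  calc _ ≤ r ^ (-(d : ℝ) / 2) * exp (-‖w‖ ^ 2 / (2 * r)) *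
          (3 * ‖w‖ / r ^ 2 + ‖w‖ ^ 3 / r ^ 3) := by
        gcongr
        exact heatKernel_le hr w
    _ = r ^ (-(d : ℝ) / 2) *
          ((3 * ‖w‖ / r ^ 2 + ‖w‖ ^ 3 / r ^ 3) * exp (-‖w‖ ^ 2 / (2 * r))) := by ring
    _ ≤ r ^ (-(d : ℝ) / 2) * (128 * r ^ (-(3 : ℝ) / 2) * exp (-‖w‖ ^ 2 / (4 * r))) := by
        exact mul_le_mul_of_nonneg_left (polynomial_mul_exp_le hr ‖w‖) (by positivity)
    _ = _ := by rw [hsplit]; ring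

theorem norm_fderiv_heatKernelSecondDeriv_le_of_norm_le (hr : 0 < r)
    (v : EuclideanSpace ℝ (Fin d)) {a w : EuclideanSpace ℝ (Fin d)} (ha : ‖a‖ ≤ 2 * ‖w‖) :
    ‖fderiv ℝ (heatKernelSecondDeriv d r v) w‖ ≤
      128 * ‖v‖ ^ 2 * r ^ (-((d : ℝ) + 3) / 2) * exp (-‖a‖ ^ 2 / (16 * r)) := by
  have hexp : exp (-‖w‖ ^ 2 / (4 * r)) ≤ exp (-‖a‖ ^ 2 / (16 * r)) := by
    rw [exp_le_exp, div_le_div_iff₀ (by positivity) (by positivity)]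
    nlinarith [pow_le_pow_left₀ (norm_nonneg a) ha 2]
  calc _ ≤ ‖v‖ ^ 2 * (heatKernel d r w * (3 * ‖w‖ / r ^ 2 + ‖w‖ ^ 3 / r ^ 3)) := by
        refine (norm_fderiv_heatKernelSecondDeriv_le hr v w).trans_eq ?_
        ring
    _ ≤ ‖v‖ ^ 2 * (128 * r ^ (-((d : ℝ) + 3) / 2) * exp (-‖a‖ ^ 2 / (16 * r))) := by
        exact mul_le_mul_of_nonneg_left ((heatKernel_mul_polynomial_le hr w).trans (by gcongr))
          (by positivity)
    _ = _ := by ring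

end Bounds

end HeatKernel

theorem stmt_8_general (d : ℕ) :
    ∃ C : ℝ, 0 < C ∧
      ∀ r : ℝ, 0 < r → ∀ i : Fin d, ∀ x y z : EuclideanSpace ℝ (Fin d),
        2 * ‖x - y‖ < ‖x - z‖ →
        |fderiv ℝ (fun w => fderiv ℝ (heatKernel d r) w (EuclideanSpace.single i 1))
            (x - z) (EuclideanSpace.single i 1)
          - fderiv ℝ (fun w => fderiv ℝ (heatKernel d r) w (EuclideanSpace.single i 1))
            (y - z) (EuclideanSpace.single i 1)|
        ≤ C * ‖x - y‖ * r ^ (-((d : ℝ) + 3) / 2) * Real.exp (-‖x - z‖ ^ 2 / (16 * r)) := by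
  refine ⟨128, by norm_num, fun r hr i x y z hxyz => ?_⟩
  set e : EuclideanSpace ℝ (Fin d) := EuclideanSpace.single i 1
  have he : ‖e‖ = 1 := by simp [e]
  have hy : y - z ∈ Metric.closedBall (x - z) ‖x - y‖ := by
    rw [Metric.mem_closedBall, dist_eq_norm, sub_sub_sub_cancel_right, norm_sub_rev]
  have hbound : ∀ w ∈ Metric.closedBall (x - z) ‖x - y‖, ‖x - z‖ ≤ 2 * ‖w‖ := fun w hw => by
    rw [Metric.mem_closedBall, dist_eq_norm] at hw
    linarith [norm_le_norm_add_norm_sub' (x - z) w, norm_sub_rev (x - z) w]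
  have hmvt := (convex_closedBall (x - z) ‖x - y‖).norm_image_sub_le_of_norm_fderiv_le
    (fun w _ => (hasFDerivAt_heatKernelSecondDeriv r e w).differentiableAt)
    (fun w hw => norm_fderiv_heatKernelSecondDeriv_le_of_norm_le hr e (hbound w hw))
    (Metric.mem_closedBall_self (norm_nonneg _)) hy
  rw [sub_sub_sub_cancel_right, norm_sub_rev y x, he, one_pow, mul_one] at hmvt
  rw [fderiv_fderiv_heatKernel_apply, fderiv_fderiv_heatKernel_apply, abs_sub_comm,
    ← Real.norm_eq_abs]
  exact hmvt.trans_eq (by ring)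

/-- Difference estimate for the pure second partial derivatives of the heat kernel:
if `|x-z| > 2|x-y|` then
`|∂²_{x_i} K(r,x−z) − ∂²_{x_i} K(r,y−z)| ≤ C |x−y| r^{-(d+3)/2} e^{-|x−z|²/(16r)}`. -/
theorem stmt_8 (d : ℕ) (hd : 1 ≤ d) :
    ∃ C : ℝ, 0 < C ∧
      ∀ r : ℝ, 0 < r → ∀ i : Fin d, ∀ x y z : EuclideanSpace ℝ (Fin d),
        2 * ‖x - y‖ < ‖x - z‖ →
        |fderiv ℝ (fun w => fderiv ℝ (heatKernel d r) w (EuclideanSpace.single i 1))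
            (x - z) (EuclideanSpace.single i 1)
          - fderiv ℝ (fun w => fderiv ℝ (heatKernel d r) w (EuclideanSpace.single i 1))
            (y - z) (EuclideanSpace.single i 1)|
        ≤ C * ‖x - y‖ * r ^ (-((d : ℝ) + 3) / 2) * Real.exp (-‖x - z‖ ^ 2 / (16 * r)) :=
  stmt_8_general d
end

section
/- Let α ∈ (0,1), R > 0 and T > 0. There exists a constant C = C(α,R,T) > 0 such that for every τ ∈ (0,T], ∫_{-R/12}^{R/12} e^{-z^2/τ} g'(z) dz ≥ C τ^{α/2}, where g'(z) = α z^{α−1} for z ∈ (0,1) and g'(z) = 0 otherwise. -/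
open MeasureTheory Real intervalIntegral

/-!
On `(0, m)` with `m ≤ min 1 √τ` the Gaussian weight is at least `e⁻¹`, so the integral is at least
`e⁻¹ ∫₀^m α z^{α-1} dz = e⁻¹ m^α`; the integrand is nonnegative, so enlarging the interval to
`[-R/12, R/12]` only helps. Taking `m = c √τ` with `c = min (min (R/12) 1 / √T) 1` keeps
`m ≤ R/12`, `m ≤ 1` and `m ≤ √τ` for all `τ ≤ T`, and gives `m^α = c^α τ^{α/2}`.
-/

theorem integral_mul_rpow_sub_one {α m : ℝ} (hα : 0 < α) :
    ∫ z in (0 : ℝ)..m, α * z ^ (α - 1) = m ^ α := by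
  rw [intervalIntegral.integral_const_mul, integral_rpow (Or.inl (by linarith)), sub_add_cancel,
    zero_rpow hα.ne', sub_zero, mul_div_cancel₀ _ hα.ne']

noncomputable def powerDensity (α : ℝ) : ℝ → ℝ :=
  (Set.Ioo 0 1).indicator fun z => α * z ^ (α - 1)

theorem eq_powerDensity {α : ℝ} {g' : ℝ → ℝ}
    (hg1 : ∀ z : ℝ, 0 < z → z < 1 → g' z = α * z ^ (α - 1))
    (hg2 : ∀ z : ℝ, z ≤ 0 ∨ 1 ≤ z → g' z = 0) :
    g' = powerDensity α := by
  funext z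
  by_cases hz : z ∈ Set.Ioo (0 : ℝ) 1
  · rw [powerDensity, Set.indicator_of_mem hz, hg1 z hz.1 hz.2]
  · rw [powerDensity, Set.indicator_of_notMem hz]
    rw [Set.mem_Ioo, not_and_or, not_lt, not_lt] at hz
    exact hg2 z hz

namespace powerDensity

variable {α : ℝ}

theorem nonneg (hα : 0 ≤ α) (z : ℝ) : 0 ≤ powerDensity α z :=
  Set.indicator_nonneg (fun _ hx => mul_nonneg hα (rpow_nonneg hx.1.le _)) z

theorem apply_of_mem_Ioo {z : ℝ} (hz : z ∈ Set.Ioo 0 1) : powerDensity α z = α * z ^ (α - 1) :=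
  Set.indicator_of_mem hz _

theorem integrable (hα : 0 < α) : Integrable (powerDensity α) := by
  rw [powerDensity, integrable_indicator_iff measurableSet_Ioo]
  exact (((intervalIntegrable_rpow' (by linarith : -1 < α - 1)).const_mul α).1).mono_set
    (Set.Ioo_subset_Ioc_self.trans (Set.uIoc_of_le zero_le_one).symm.subset)

theorem integrable_exp_mul (hα : 0 < α) {τ : ℝ} (hτ : 0 ≤ τ) :
    Integrable fun z => exp (-z ^ 2 / τ) * powerDensity α z := by
  have hτ_cont : Continuous fun z : ℝ => exp (-z ^ 2 / τ) := by fun_prop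
  refine Integrable.mono' (integrable hα)
    (hτ_cont.aestronglyMeasurable.mul (integrable hα).1) (.of_forall fun z => ?_)
  rw [norm_mul, norm_of_nonneg (exp_nonneg _), norm_of_nonneg (nonneg hα.le z)]
  exact mul_le_of_le_one_left (nonneg hα.le z) (exp_le_one_iff.2 (by
    rw [neg_div]; exact neg_nonpos.2 (div_nonneg (sq_nonneg z) hτ)))

theorem le_integral_exp_mul (hα : 0 < α) {τ m : ℝ} (hτ : 0 < τ) (hm0 : 0 ≤ m) (hm1 : m ≤ 1)
    (hmτ : m ≤ √τ) : exp (-1) * m ^ α ≤ ∫ z in (0 : ℝ)..m, exp (-z ^ 2 / τ) * powerDensity α z := by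
  rw [← integral_mul_rpow_sub_one hα, ← intervalIntegral.integral_const_mul]
  refine integral_mono_on_of_le_Ioo hm0 ?_ (integrable_exp_mul hα hτ.le).intervalIntegrable
    fun z hz => ?_
  · exact ((intervalIntegrable_rpow' (by linarith)).const_mul α).const_mul _
  · have hzτ : z ^ 2 ≤ τ := ((lt_sqrt hz.1.le).1 (hz.2.trans_le hmτ)).le
    rw [apply_of_mem_Ioo ⟨hz.1, hz.2.trans_le hm1⟩]
    gcongr
    · exact mul_nonneg hα.le (rpow_nonneg hz.1.le _)
    · rwa [neg_div, neg_le_neg_iff, div_le_one hτ]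

end powerDensity

/-- Gaussian lower bound: `∫_{-R/12}^{R/12} e^{-z²/τ} g'(z) dz ≥ C τ^{α/2}` for
`τ ∈ (0,T]`, where `g'(z) = α z^{α-1}` on `(0,1)` and `0` otherwise. -/
theorem stmt_11 (α R T : ℝ) (hα : α ∈ Set.Ioo (0 : ℝ) 1) (hR : 0 < R) (hT : 0 < T)
    (g' : ℝ → ℝ)
    (hg1 : ∀ z : ℝ, 0 < z → z < 1 → g' z = α * z ^ (α - 1))
    (hg2 : ∀ z : ℝ, z ≤ 0 ∨ 1 ≤ z → g' z = 0) :
    ∃ C : ℝ, 0 < C ∧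
      ∀ τ : ℝ, 0 < τ → τ ≤ T →
        C * τ ^ (α / 2) ≤ ∫ z in (-(R / 12))..(R / 12), Real.exp (-z ^ 2 / τ) * g' z := by
  obtain ⟨hα0, -⟩ := hα
  rw [eq_powerDensity hg1 hg2]
  set r := min (R / 12) 1
  have hr : 0 < r := lt_min (by positivity) one_pos
  set c := min (r / √T) 1
  have hc : 0 < c := lt_min (by positivity) one_pos
  refine ⟨exp (-1) * c ^ α, by positivity, fun τ hτ hτT => ?_⟩
  have hm_le_r : c * √τ ≤ r :=
    calc c * √τ ≤ r / √T * √T := by gcongr; exact min_le_left _ _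
      _ = r := div_mul_cancel₀ _ (sqrt_pos.2 hT).ne'
  have hm_le_sqrt : c * √τ ≤ √τ := mul_le_of_le_one_left (sqrt_nonneg _) (min_le_right _ _)
  calc exp (-1) * c ^ α * τ ^ (α / 2) = exp (-1) * (c * √τ) ^ α := by
        rw [mul_rpow hc.le (sqrt_nonneg _), sqrt_eq_rpow, ← rpow_mul hτ.le, mul_assoc,
          one_div_mul_eq_div]
    _ ≤ ∫ z in (0 : ℝ)..c * √τ, exp (-z ^ 2 / τ) * powerDensity α z :=
        powerDensity.le_integral_exp_mul hα0 hτ (by positivity)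
          (hm_le_r.trans (min_le_right _ _)) hm_le_sqrt
    _ ≤ _ := integral_mono_interval (by linarith) (by positivity)
        (hm_le_r.trans (min_le_left _ _))
        (.of_forall fun z => mul_nonneg (exp_nonneg _) (powerDensity.nonneg hα0.le z))
        (powerDensity.integrable_exp_mul hα0 hτ.le).intervalIntegrable
end

section
/- Let α ∈ (0,1), R > 0 and T > 0. There exists a constant C = C(α,R,T) > 0 such that for all 0 < s < t₁ ≤ T and all x ∈ ℝ with |x| ≤ R/8, the double Gaussian integral satisfies ∫_ℝ (2πs)^{-1/2} e^{-y^2/(2s)} [ ∫_{-R/3}^{R/3} (2π(t₁−s))^{-1/2} e^{-(z−y)^2/(2(t₁−s))} g'(x + z − y) dz ] dy ≥ C (t₁ − s)^{(α−1)/2} e^{-x^2/(t₁−s)}, where g'(u) = α u^{α−1} for u ∈ (0,1) and g'(u) = 0 otherwise. -/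
/-!
Write `τ = t₁ - s` and `m = min (√τ, R/24, 1/2)`. For `|y| ≤ R/24` the window of the inner integral
contains the `z` with `x + z - y ∈ [m/2, 3m/4]`. There `g'(x + z - y) ≥ α τ^{(α-1)/2}` because
`x + z - y ≤ √τ` and `α < 1`, and `(z - y)² ≤ 2τ + 2x²` keeps the kernel above
`(2πτ)^{-1/2} e^{-1} e^{-x²/τ}`; the window has length `m/4` and `m (2πτ)^{-1/2}` is bounded below
uniformly in `τ ≤ T`. The outer Gaussian gives the window `|y| ≤ R/24` mass bounded below
uniformly in `s ≤ T` by the same scaling argument.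
-/

open MeasureTheory Real intervalIntegral Set

noncomputable section

def gaussKernel (t y : ℝ) : ℝ := (2 * π * t) ^ (-(1 : ℝ) / 2) * exp (-y ^ 2 / (2 * t))

def kernelConst (T d : ℝ) : ℝ :=
  min ((2 * π) ^ (-(1 : ℝ) / 2)) (d * (2 * π * T) ^ (-(1 : ℝ) / 2))

def truncPowDeriv (α : ℝ) : ℝ → ℝ := (Ioo 0 1).indicator fun u => α * u ^ (α - 1)

end

lemma mul_sub_le_intervalIntegral {f : ℝ → ℝ} {a b a' b' c : ℝ} (ha : a ≤ a') (hab : a' ≤ b')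
    (hb : b' ≤ b) (hf0 : ∀ x, 0 ≤ f x) (hf : IntervalIntegrable f volume a b)
    (hc : ∀ x ∈ Icc a' b', c ≤ f x) :
    c * (b' - a') ≤ ∫ x in a..b, f x :=
  calc c * (b' - a') = ∫ _ in a'..b', c := by simp [mul_comm]
    _ ≤ ∫ x in a'..b', f x := by
      refine integral_mono_on hab intervalIntegrable_const (hf.mono_set ?_) hc
      rw [uIcc_of_le hab, uIcc_of_le (by linarith)]
      exact Icc_subset_Icc ha hb
    _ ≤ ∫ x in a..b, f x :=
      integral_mono_interval ha hab hb (.of_forall hf0) hf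

section Kernel

lemma kernelConst_pos {T d : ℝ} (hT : 0 < T) (hd : 0 < d) : 0 < kernelConst T d :=
  lt_min (by positivity) (by positivity)

lemma kernelConst_le_rpow_mul_min_sqrt {t T d : ℝ} (ht : 0 < t) (htT : t ≤ T) (hd : 0 ≤ d) :
    kernelConst T d ≤ (2 * π * t) ^ (-(1 : ℝ) / 2) * min (√t) d := by
  rcases le_total (√t) d with h | h
  · have : (2 * π * t) ^ (-(1 : ℝ) / 2) * √t = (2 * π) ^ (-(1 : ℝ) / 2) := by
      rw [sqrt_eq_rpow, mul_rpow (by positivity) ht.le, mul_assoc, ← rpow_add ht]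
      norm_num
    rw [min_eq_left h, this]
    exact min_le_left _ _
  · rw [min_eq_right h, mul_comm]
    refine (min_le_right _ _).trans (mul_le_mul_of_nonneg_left ?_ hd)
    exact rpow_le_rpow_of_nonpos (by positivity) (by gcongr) (by norm_num)

lemma gaussKernel_nonneg {t : ℝ} (ht : 0 ≤ t) (y : ℝ) : 0 ≤ gaussKernel t y := by
  unfold gaussKernel; positivity

lemma gaussKernel_le {t : ℝ} (ht : 0 ≤ t) (y : ℝ) :
    gaussKernel t y ≤ (2 * π * t) ^ (-(1 : ℝ) / 2) :=
  mul_le_of_le_one_right (by positivity)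
    (exp_le_one_iff.2 (div_nonpos_of_nonpos_of_nonneg (by nlinarith) (by positivity)))

lemma rpow_mul_exp_neg_le_gaussKernel {t y k : ℝ} (ht : 0 < t) (hy : y ^ 2 ≤ 2 * t * k) :
    (2 * π * t) ^ (-(1 : ℝ) / 2) * exp (-k) ≤ gaussKernel t y := by
  unfold gaussKernel
  gcongr
  rw [le_div_iff₀ (by positivity)]
  linarith

lemma integrable_gaussKernel {t : ℝ} (ht : 0 < t) : Integrable (gaussKernel t) := by
  convert (integrable_exp_neg_mul_sq (b := 1 / (2 * t)) (by positivity)).const_mul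
    ((2 * π * t) ^ (-(1 : ℝ) / 2)) using 1
  ext y
  unfold gaussKernel
  ring_nf

end Kernel

section Profile

variable {α : ℝ}

lemma eq_truncPowDeriv {g' : ℝ → ℝ} (hg1 : ∀ u : ℝ, 0 < u → u < 1 → g' u = α * u ^ (α - 1))
    (hg2 : ∀ u : ℝ, u ≤ 0 ∨ 1 ≤ u → g' u = 0) : g' = truncPowDeriv α := by
  funext u
  by_cases hu : u ∈ Ioo 0 1
  · rw [truncPowDeriv, indicator_of_mem hu, hg1 u hu.1 hu.2]
  · rw [truncPowDeriv, indicator_of_notMem hu, hg2 u]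
    simpa only [mem_Ioo, not_and_or, not_lt] using hu

lemma truncPowDeriv_nonneg (hα : 0 ≤ α) (u : ℝ) : 0 ≤ truncPowDeriv α u :=
  indicator_nonneg (fun _ hv => mul_nonneg hα (rpow_nonneg hv.1.le _)) u

lemma measurable_truncPowDeriv : Measurable (truncPowDeriv α) :=
  (by fun_prop : Measurable fun u : ℝ => α * u ^ (α - 1)).indicator measurableSet_Ioo

lemma integrable_truncPowDeriv (hα : 0 < α) : Integrable (truncPowDeriv α) := by
  rw [truncPowDeriv, integrable_indicator_iff measurableSet_Ioo]
  have : IntegrableOn (fun u : ℝ => u ^ (α - 1)) (Ioc 0 1) :=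
    (intervalIntegrable_iff_integrableOn_Ioc_of_le zero_le_one).1
      (intervalIntegrable_rpow' (by linarith))
  exact (this.mono_set Ioo_subset_Ioc_self).const_mul α

lemma mul_rpow_le_truncPowDeriv (hα₀ : 0 ≤ α) (hα₁ : α ≤ 1) {u r : ℝ} (hu : 0 < u) (hu₁ : u < 1)
    (hur : u ≤ r) : α * r ^ (α - 1) ≤ truncPowDeriv α u := by
  rw [truncPowDeriv, indicator_of_mem (show u ∈ Ioo 0 1 from ⟨hu, hu₁⟩)]
  exact mul_le_mul_of_nonneg_left (rpow_le_rpow_of_nonpos hu hur (by linarith)) hα₀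

end Profile

section Smoothing

variable {f : ℝ → ℝ} {t a b x : ℝ}

lemma integrable_gaussKernel_mul_comp (hf : Integrable f) (ht : 0 ≤ t) (x y : ℝ) :
    Integrable fun z => gaussKernel t (z - y) * f (x + z - y) :=
  ((hf.comp_sub_right y).comp_add_left x).bdd_mul (c := (2 * π * t) ^ (-(1 : ℝ) / 2))
    (show Continuous fun z => gaussKernel t (z - y) by
      unfold gaussKernel; fun_prop).aestronglyMeasurable
    (.of_forall fun z => by
      rw [norm_of_nonneg (gaussKernel_nonneg ht _)]; exact gaussKernel_le ht _)

lemma intervalIntegral_gaussKernel_mul_comp_le (hf0 : ∀ u, 0 ≤ f u) (hf : Integrable f)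
    (ht : 0 ≤ t) (hab : a ≤ b) (y : ℝ) :
    ∫ z in a..b, gaussKernel t (z - y) * f (x + z - y)
      ≤ (2 * π * t) ^ (-(1 : ℝ) / 2) * ∫ u, f u := by
  have hshift : Integrable fun z => f (x + z - y) := (hf.comp_sub_right y).comp_add_left x
  calc ∫ z in a..b, gaussKernel t (z - y) * f (x + z - y)
      ≤ ∫ z, gaussKernel t (z - y) * f (x + z - y) := by
        rw [integral_of_le hab]
        exact setIntegral_le_integral (integrable_gaussKernel_mul_comp hf ht x y)
          (.of_forall fun z => mul_nonneg (gaussKernel_nonneg ht _) (hf0 _))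
    _ ≤ ∫ z, (2 * π * t) ^ (-(1 : ℝ) / 2) * f (x + z - y) :=
        integral_mono (integrable_gaussKernel_mul_comp hf ht x y) (hshift.const_mul _)
          fun z => mul_le_mul_of_nonneg_right (gaussKernel_le ht _) (hf0 _)
    _ = (2 * π * t) ^ (-(1 : ℝ) / 2) * ∫ u, f u := by
        rw [MeasureTheory.integral_const_mul, integral_add_left_eq_self (fun z => f (z - y)),
          integral_sub_right_eq_self]

lemma stronglyMeasurable_intervalIntegral_gaussKernel_mul_comp (hf : Measurable f)
    (hab : a ≤ b) :
    StronglyMeasurable fun y => ∫ z in a..b, gaussKernel t (z - y) * f (x + z - y) := by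
  simp only [integral_of_le hab]
  refine StronglyMeasurable.integral_prod_right
    (f := fun y z => gaussKernel t (z - y) * f (x + z - y)) ?_
  exact (Measurable.mul (by unfold gaussKernel; fun_prop)
    (hf.comp (by fun_prop))).stronglyMeasurable

end Smoothing

lemma le_intervalIntegral_gaussKernel_mul_truncPowDeriv {α R T τ x y : ℝ} (hα : α ∈ Ioo 0 1)
    (hR : 0 < R) (hτ : 0 < τ) (hτT : τ ≤ T) (hx : |x| ≤ R / 8) (hy : |y| ≤ R / 24) :
    kernelConst T (min (R / 24) (1 / 2)) / 4 * α * exp (-1) * (τ ^ ((α - 1) / 2) * exp (-x ^ 2 / τ))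
      ≤ ∫ z in -(R / 3)..R / 3, gaussKernel τ (z - y) * truncPowDeriv α (x + z - y) := by
  obtain ⟨hα₀, hα₁⟩ := hα
  obtain ⟨hx₁, hx₂⟩ := abs_le.1 hx
  obtain ⟨hy₁, hy₂⟩ := abs_le.1 hy
  set m := min (√τ) (min (R / 24) (1 / 2))
  have hm₀ : 0 < m := lt_min (sqrt_pos.2 hτ) (lt_min (by positivity) (by norm_num))
  have hm_sqrt : m ≤ √τ := min_le_left _ _
  have hm_R : m ≤ R / 24 := (min_le_right _ _).trans (min_le_left _ _)
  have hm_half : m ≤ 1 / 2 := (min_le_right _ _).trans (min_le_right _ _)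
  have hm_sq : m ^ 2 ≤ τ := (le_sqrt hm₀.le hτ.le).1 hm_sqrt
  have hwindow : ∀ z ∈ Icc (y - x + m / 2) (y - x + 3 * m / 4),
      (2 * π * τ) ^ (-(1 : ℝ) / 2) * exp (-(1 + x ^ 2 / τ)) * (α * τ ^ ((α - 1) / 2))
        ≤ gaussKernel τ (z - y) * truncPowDeriv α (x + z - y) := by
    rintro z ⟨hz₁, hz₂⟩
    have hu₀ : 0 < x + z - y := by linarith
    have hu : x + z - y ≤ m := by linarith
    have hkernel := rpow_mul_exp_neg_le_gaussKernel hτ (y := z - y) (k := 1 + x ^ 2 / τ) (by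
      rw [mul_add, mul_one, mul_assoc, mul_div_cancel₀ _ hτ.ne']
      nlinarith [sq_nonneg (x + z - y + x)])
    have hprofile := mul_rpow_le_truncPowDeriv hα₀.le hα₁.le hu₀ (by linarith) (hu.trans hm_sqrt)
    rw [sqrt_eq_rpow, ← rpow_mul hτ.le, one_div_mul_eq_div] at hprofile
    exact mul_le_mul hkernel hprofile (by positivity) (gaussKernel_nonneg hτ.le _)
  have hwindow_int := mul_sub_le_intervalIntegral (a := -(R / 3)) (b := R / 3)
    (by linarith) (by linarith) (by linarith)
    (fun z => mul_nonneg (gaussKernel_nonneg hτ.le _) (truncPowDeriv_nonneg hα₀.le _))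
    (integrable_gaussKernel_mul_comp (integrable_truncPowDeriv hα₀) hτ.le x y).intervalIntegrable
    hwindow
  have hscale := kernelConst_le_rpow_mul_min_sqrt hτ hτT (d := min (R / 24) (1 / 2))
    (by positivity)
  have hexp : exp (-(1 + x ^ 2 / τ)) = exp (-1) * exp (-x ^ 2 / τ) := by
    rw [← exp_add]; ring_nf
  calc kernelConst T (min (R / 24) (1 / 2)) / 4 * α * exp (-1)
        * (τ ^ ((α - 1) / 2) * exp (-x ^ 2 / τ))
      = kernelConst T (min (R / 24) (1 / 2)) * (exp (-(1 + x ^ 2 / τ)) * (α * τ ^ ((α - 1) / 2)))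
          / 4 := by rw [hexp]; ring
    _ ≤ (2 * π * τ) ^ (-(1 : ℝ) / 2) * m * (exp (-(1 + x ^ 2 / τ)) * (α * τ ^ ((α - 1) / 2)))
          / 4 := by gcongr
    _ = (2 * π * τ) ^ (-(1 : ℝ) / 2) * exp (-(1 + x ^ 2 / τ)) * (α * τ ^ ((α - 1) / 2))
          * (y - x + 3 * m / 4 - (y - x + m / 2)) := by ring
    _ ≤ _ := hwindow_int

lemma le_integral_gaussKernel_mul {s T d B M : ℝ} {I : ℝ → ℝ} (hs : 0 < s) (hsT : s ≤ T)
    (hd : 0 ≤ d) (hB : 0 ≤ B) (hI : AEStronglyMeasurable I) (hI₀ : ∀ y, 0 ≤ I y)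
    (hIM : ∀ y, I y ≤ M) (hIB : ∀ y, |y| ≤ d → B ≤ I y) :
    2 * kernelConst T d * exp (-(1 / 2)) * B ≤ ∫ y, gaussKernel s y * I y := by
  set e := min (√s) d
  have he₀ : 0 ≤ e := le_min (sqrt_nonneg _) hd
  have hint : Integrable fun y => gaussKernel s y * I y :=
    (integrable_gaussKernel hs).mul_bdd hI
      (.of_forall fun y => by rw [norm_of_nonneg (hI₀ y)]; exact hIM y)
  have hnonneg : ∀ y, 0 ≤ gaussKernel s y * I y :=
    fun y => mul_nonneg (gaussKernel_nonneg hs.le _) (hI₀ y)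
  have hwindow : ∀ y ∈ Icc (-e) e,
      (2 * π * s) ^ (-(1 : ℝ) / 2) * exp (-(1 / 2)) * B ≤ gaussKernel s y * I y := by
    rintro y ⟨hy₁, hy₂⟩
    have hy : |y| ≤ e := abs_le.2 ⟨hy₁, hy₂⟩
    have hy_sq : y ^ 2 ≤ s :=
      (sq_le_sq' hy₁ hy₂).trans ((le_sqrt he₀ hs.le).1 (min_le_left _ _))
    exact mul_le_mul (rpow_mul_exp_neg_le_gaussKernel hs (by linarith))
      (hIB y (hy.trans (min_le_right _ _))) hB (gaussKernel_nonneg hs.le _)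
  calc 2 * kernelConst T d * exp (-(1 / 2)) * B
      = kernelConst T d * (2 * exp (-(1 / 2)) * B) := by ring
    _ ≤ (2 * π * s) ^ (-(1 : ℝ) / 2) * e * (2 * exp (-(1 / 2)) * B) := by
        gcongr; exact kernelConst_le_rpow_mul_min_sqrt hs hsT hd
    _ = (2 * π * s) ^ (-(1 : ℝ) / 2) * exp (-(1 / 2)) * B * (e - -e) := by ring
    _ ≤ ∫ y in -e..e, gaussKernel s y * I y :=
        mul_sub_le_intervalIntegral le_rfl (by linarith) le_rfl hnonneg hint.intervalIntegrable
          hwindow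
    _ ≤ ∫ y, gaussKernel s y * I y := by
        rw [integral_of_le (by linarith)]
        exact setIntegral_le_integral hint (.of_forall hnonneg)

/-- Double Gaussian lower bound: for `0 < s < t₁ ≤ T` and `|x| ≤ R/8`,
`∫_ℝ (2πs)^{-1/2} e^{-y²/(2s)} [∫_{-R/3}^{R/3} (2π(t₁−s))^{-1/2} e^{-(z−y)²/(2(t₁−s))}
 g'(x+z−y) dz] dy ≥ C (t₁−s)^{(α−1)/2} e^{-x²/(t₁−s)}`,
where `g'(u) = α u^{α−1}` on `(0,1)` and `0` otherwise. -/
theorem stmt_12 (α R T : ℝ) (hα : α ∈ Set.Ioo (0 : ℝ) 1) (hR : 0 < R) (hT : 0 < T)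
    (g' : ℝ → ℝ)
    (hg1 : ∀ u : ℝ, 0 < u → u < 1 → g' u = α * u ^ (α - 1))
    (hg2 : ∀ u : ℝ, u ≤ 0 ∨ 1 ≤ u → g' u = 0) :
    ∃ C : ℝ, 0 < C ∧
      ∀ s t₁ x : ℝ, 0 < s → s < t₁ → t₁ ≤ T → |x| ≤ R / 8 →
        C * (t₁ - s) ^ ((α - 1) / 2) * Real.exp (-x ^ 2 / (t₁ - s))
          ≤ ∫ y : ℝ, (2 * π * s) ^ (-(1 : ℝ) / 2) * Real.exp (-y ^ 2 / (2 * s)) *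
              ∫ z in (-(R / 3))..(R / 3),
                (2 * π * (t₁ - s)) ^ (-(1 : ℝ) / 2) *
                  Real.exp (-(z - y) ^ 2 / (2 * (t₁ - s))) * g' (x + z - y) := by
  obtain rfl := eq_truncPowDeriv hg1 hg2
  have hc₁ := kernelConst_pos hT (d := R / 24) (by positivity)
  have hc₂ := kernelConst_pos hT (d := min (R / 24) (1 / 2)) (by positivity)
  refine ⟨2 * kernelConst T (R / 24) * exp (-(1 / 2))
    * (kernelConst T (min (R / 24) (1 / 2)) / 4 * α * exp (-1)), by have := hα.1; positivity, ?_⟩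
  intro s t₁ x hs hst ht₁ hx
  have hτ : 0 < t₁ - s := sub_pos.2 hst
  have hR3 : -(R / 3) ≤ R / 3 := by linarith
  have hα₀ : 0 ≤ α := hα.1.le
  calc _ = 2 * kernelConst T (R / 24) * exp (-(1 / 2))
        * (kernelConst T (min (R / 24) (1 / 2)) / 4 * α * exp (-1)
          * ((t₁ - s) ^ ((α - 1) / 2) * exp (-x ^ 2 / (t₁ - s)))) := by ring
    _ ≤ ∫ y, gaussKernel s y
          * ∫ z in -(R / 3)..R / 3, gaussKernel (t₁ - s) (z - y) * truncPowDeriv α (x + z - y) :=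
      le_integral_gaussKernel_mul hs (by linarith) (by positivity) (by positivity)
        (stronglyMeasurable_intervalIntegral_gaussKernel_mul_comp measurable_truncPowDeriv
          hR3).aestronglyMeasurable
        (fun y => integral_nonneg hR3 fun z _ =>
          mul_nonneg (gaussKernel_nonneg hτ.le _) (truncPowDeriv_nonneg hα₀ _))
        (fun y => intervalIntegral_gaussKernel_mul_comp_le (truncPowDeriv_nonneg hα₀)
          (integrable_truncPowDeriv hα.1) hτ.le hR3 y)
        (fun y hy => le_intervalIntegral_gaussKernel_mul_truncPowDeriv hα hR hτ (by linarith)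
          hx hy)
end

section
/- Let α ∈ (0,1) and T > 0. There exists a constant C = C(α,T) > 0 such that for all 0 < s < t ≤ T, ∫_0^1 (2πs)^{-1/2} α y^{α−1} e^{-y^2/s} e^{-2y^2/(t−s)} dy ≥ C s^{(α−1)/2} (t−s)^{α/2} t^{-α/2}. -/
open MeasureTheory Real intervalIntegral

/-- Gaussian lower bound: for `0 < s < t ≤ T`,
`∫_0^1 (2πs)^{-1/2} α y^{α−1} e^{-y²/s} e^{-2y²/(t−s)} dy
 ≥ C s^{(α−1)/2} (t−s)^{α/2} t^{-α/2}`. -/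
theorem stmt_14 (α T : ℝ) (hα : α ∈ Set.Ioo (0 : ℝ) 1) (hT : 0 < T) :
    ∃ C : ℝ, 0 < C ∧
      ∀ s t : ℝ, 0 < s → s < t → t ≤ T →
        C * s ^ ((α - 1) / 2) * (t - s) ^ (α / 2) * t ^ (-(α / 2))
          ≤ ∫ y in (0 : ℝ)..1,
              (2 * π * s) ^ (-(1 : ℝ) / 2) * (α * y ^ (α - 1)) *
                Real.exp (-y ^ 2 / s) * Real.exp (-2 * y ^ 2 / (t - s)) := by
  obtain ⟨hα0, hα1⟩ := hα
  have hπ : 0 < π := Real.pi_pos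
  set K : ℝ := max 1 (T / 2) with hKdef
  have hK1 : (1 : ℝ) ≤ K := le_max_left _ _
  have hK0 : (0 : ℝ) < K := lt_of_lt_of_le one_pos hK1
  refine ⟨Real.exp (-1) * (2 * π) ^ (-(1 : ℝ) / 2) * (2 * K) ^ (-(α / 2)),
    by positivity, ?_⟩
  intro s t hs hst htT
  have hts : 0 < t - s := sub_pos.mpr hst
  have ht : 0 < t := hs.trans hst
  set q : ℝ := s * (t - s) / (2 * t) with hqdef
  have hq : 0 < q := by positivity
  set b : ℝ := Real.sqrt (min 1 q) with hbdef
  have hmin0 : 0 < min 1 q := lt_min one_pos hq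
  have hb0 : 0 < b := Real.sqrt_pos.mpr hmin0
  have hb1 : b ≤ 1 := Real.sqrt_le_one.mpr (min_le_left _ _)
  have hbsq : b ^ 2 ≤ q := by
    rw [hbdef, Real.sq_sqrt hmin0.le]; exact min_le_right _ _
  -- continuity of the bounded factor
  have hcont : Continuous (fun y : ℝ =>
      (2 * π * s) ^ (-(1 : ℝ) / 2) * α * Real.exp (-y ^ 2 / s) *
        Real.exp (-2 * y ^ 2 / (t - s))) := by fun_prop
  -- integrability of the integrand on any interval
  have hf_int : ∀ a c : ℝ, IntervalIntegrable (fun y : ℝ =>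
      (2 * π * s) ^ (-(1 : ℝ) / 2) * (α * y ^ (α - 1)) *
        Real.exp (-y ^ 2 / s) * Real.exp (-2 * y ^ 2 / (t - s))) volume a c := by
    intro a c
    have h1 : IntervalIntegrable (fun y : ℝ => y ^ (α - 1)) volume a c :=
      intervalIntegrable_rpow' (by linarith)
    have h2 := h1.mul_continuousOn (g := fun y : ℝ =>
      (2 * π * s) ^ (-(1 : ℝ) / 2) * α * Real.exp (-y ^ 2 / s) *
        Real.exp (-2 * y ^ 2 / (t - s))) hcont.continuousOn
    have heq : (fun y : ℝ =>
        (2 * π * s) ^ (-(1 : ℝ) / 2) * (α * y ^ (α - 1)) *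
          Real.exp (-y ^ 2 / s) * Real.exp (-2 * y ^ 2 / (t - s)))
        = fun y : ℝ => y ^ (α - 1) *
          ((2 * π * s) ^ (-(1 : ℝ) / 2) * α * Real.exp (-y ^ 2 / s) *
            Real.exp (-2 * y ^ 2 / (t - s))) := by
      funext y; ring
    rw [heq]; exact h2
  -- tail integral is nonnegative
  have htail : 0 ≤ ∫ y in b..1,
      (2 * π * s) ^ (-(1 : ℝ) / 2) * (α * y ^ (α - 1)) *
        Real.exp (-y ^ 2 / s) * Real.exp (-2 * y ^ 2 / (t - s)) := by
    apply intervalIntegral.integral_nonneg hb1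
    intro y hy
    have hy0 : 0 ≤ y := hb0.le.trans hy.1
    positivity
  -- splitting the integral
  have hsplit : (∫ y in (0:ℝ)..1,
      (2 * π * s) ^ (-(1 : ℝ) / 2) * (α * y ^ (α - 1)) *
        Real.exp (-y ^ 2 / s) * Real.exp (-2 * y ^ 2 / (t - s)))
      = (∫ y in (0:ℝ)..b,
      (2 * π * s) ^ (-(1 : ℝ) / 2) * (α * y ^ (α - 1)) *
        Real.exp (-y ^ 2 / s) * Real.exp (-2 * y ^ 2 / (t - s)))
      + ∫ y in b..1,
      (2 * π * s) ^ (-(1 : ℝ) / 2) * (α * y ^ (α - 1)) *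
        Real.exp (-y ^ 2 / s) * Real.exp (-2 * y ^ 2 / (t - s)) :=
    (intervalIntegral.integral_add_adjacent_intervals (hf_int 0 b) (hf_int b 1)).symm
  -- lower bound of the integrand on [0, b]
  have hmono : (∫ y in (0:ℝ)..b,
      ((2 * π * s) ^ (-(1 : ℝ) / 2) * α * Real.exp (-1)) * y ^ (α - 1))
      ≤ ∫ y in (0:ℝ)..b,
      (2 * π * s) ^ (-(1 : ℝ) / 2) * (α * y ^ (α - 1)) *
        Real.exp (-y ^ 2 / s) * Real.exp (-2 * y ^ 2 / (t - s)) := by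
    apply intervalIntegral.integral_mono_on hb0.le
      ((intervalIntegrable_rpow' (by linarith)).const_mul _) (hf_int 0 b)
    intro y hy
    obtain ⟨hy0, hyb⟩ := hy
    have hy2 : y ^ 2 ≤ q := le_trans (by nlinarith) hbsq
    have hy2' : 2 * t * y ^ 2 ≤ s * (t - s) := by
      rw [hqdef, le_div_iff₀ (by positivity)] at hy2; linarith [hy2]
    have hexp : Real.exp (-1) ≤
        Real.exp (-y ^ 2 / s) * Real.exp (-2 * y ^ 2 / (t - s)) := by
      rw [← Real.exp_add]
      apply Real.exp_le_exp.mpr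
      have h1 : y ^ 2 / s + 2 * y ^ 2 / (t - s) ≤ 1 := by
        rw [div_add_div _ _ hs.ne' hts.ne', div_le_one (by positivity)]
        nlinarith
      have e1 : -y ^ 2 / s = -(y ^ 2 / s) := by ring
      have e2 : -2 * y ^ 2 / (t - s) = -(2 * y ^ 2 / (t - s)) := by ring
      rw [e1, e2]; linarith
    have hA : 0 ≤ (2 * π * s) ^ (-(1 : ℝ) / 2) * (α * y ^ (α - 1)) := by positivity
    calc ((2 * π * s) ^ (-(1 : ℝ) / 2) * α * Real.exp (-1)) * y ^ (α - 1)
        = ((2 * π * s) ^ (-(1 : ℝ) / 2) * (α * y ^ (α - 1))) * Real.exp (-1) := by ring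
      _ ≤ ((2 * π * s) ^ (-(1 : ℝ) / 2) * (α * y ^ (α - 1))) *
            (Real.exp (-y ^ 2 / s) * Real.exp (-2 * y ^ 2 / (t - s))) :=
          mul_le_mul_of_nonneg_left hexp hA
      _ = (2 * π * s) ^ (-(1 : ℝ) / 2) * (α * y ^ (α - 1)) *
            Real.exp (-y ^ 2 / s) * Real.exp (-2 * y ^ 2 / (t - s)) := by ring
  -- value of the model integral
  have hval : (∫ y in (0:ℝ)..b,
      ((2 * π * s) ^ (-(1 : ℝ) / 2) * α * Real.exp (-1)) * y ^ (α - 1))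
      = (2 * π * s) ^ (-(1 : ℝ) / 2) * Real.exp (-1) * b ^ α := by
    rw [intervalIntegral.integral_const_mul, integral_rpow (Or.inl (by linarith))]
    rw [show α - 1 + 1 = α by ring, Real.zero_rpow hα0.ne']
    field_simp
    ring
  -- rpow algebra
  have hbα : b ^ α = (min 1 q) ^ (α / 2) := by
    rw [hbdef, Real.sqrt_eq_rpow, ← Real.rpow_mul hmin0.le,
      show 1 / 2 * α = α / 2 by ring]
  have hqle : q ≤ K := by
    have h1 : q ≤ T / 2 := by
      rw [hqdef, div_le_div_iff₀ (by positivity) two_pos]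
      nlinarith
    exact h1.trans (le_max_right _ _)
  have hminq : q / K ≤ min 1 q :=
    le_min ((div_le_one hK0).mpr hqle) (div_le_self hq.le hK1)
  have hstep : (q / K) ^ (α / 2) ≤ (min 1 q) ^ (α / 2) :=
    Real.rpow_le_rpow (by positivity) hminq (by positivity)
  have hqK : q / K = s * (t - s) / (2 * K * t) := by rw [hqdef]; ring
  have e1 : (q / K) ^ (α / 2)
      = s ^ (α / 2) * (t - s) ^ (α / 2) / ((2 * K) ^ (α / 2) * t ^ (α / 2)) := by
    rw [hqK, Real.div_rpow (by positivity) (by positivity),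
      Real.mul_rpow hs.le hts.le, Real.mul_rpow (by positivity) ht.le]
  have e2 : s ^ ((α - 1) / 2) = s ^ (α / 2) * s ^ (-(1 : ℝ) / 2) := by
    rw [← Real.rpow_add hs, show α / 2 + -(1 : ℝ) / 2 = (α - 1) / 2 by ring]
  have e3 : (2 * π * s) ^ (-(1 : ℝ) / 2)
      = (2 * π) ^ (-(1 : ℝ) / 2) * s ^ (-(1 : ℝ) / 2) :=
    Real.mul_rpow (by positivity) hs.le
  have e4 : (2 * K) ^ (-(α / 2)) = ((2 * K) ^ (α / 2))⁻¹ :=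
    Real.rpow_neg (by positivity) _
  have e5 : t ^ (-(α / 2)) = (t ^ (α / 2))⁻¹ := Real.rpow_neg ht.le _
  have h2K : (0:ℝ) < (2 * K) ^ (α / 2) := by positivity
  have htα : (0:ℝ) < t ^ (α / 2) := by positivity
  calc Real.exp (-1) * (2 * π) ^ (-(1 : ℝ) / 2) * (2 * K) ^ (-(α / 2)) *
        s ^ ((α - 1) / 2) * (t - s) ^ (α / 2) * t ^ (-(α / 2))
      = (Real.exp (-1) * (2 * π) ^ (-(1 : ℝ) / 2) * s ^ (-(1 : ℝ) / 2)) *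
          ((q / K) ^ (α / 2)) := by
        rw [e1, e2, e4, e5]
        field_simp
    _ ≤ (Real.exp (-1) * (2 * π) ^ (-(1 : ℝ) / 2) * s ^ (-(1 : ℝ) / 2)) *
          ((min 1 q) ^ (α / 2)) :=
        mul_le_mul_of_nonneg_left hstep (by positivity)
    _ = (2 * π * s) ^ (-(1 : ℝ) / 2) * Real.exp (-1) * b ^ α := by
        rw [hbα, e3]; ring
    _ = ∫ y in (0:ℝ)..b,
        ((2 * π * s) ^ (-(1 : ℝ) / 2) * α * Real.exp (-1)) * y ^ (α - 1) := hval.symm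
    _ ≤ ∫ y in (0:ℝ)..b,
        (2 * π * s) ^ (-(1 : ℝ) / 2) * (α * y ^ (α - 1)) *
          Real.exp (-y ^ 2 / s) * Real.exp (-2 * y ^ 2 / (t - s)) := hmono
    _ ≤ ∫ y in (0:ℝ)..1,
        (2 * π * s) ^ (-(1 : ℝ) / 2) * (α * y ^ (α - 1)) *
          Real.exp (-y ^ 2 / s) * Real.exp (-2 * y ^ 2 / (t - s)) := by
        rw [hsplit]; linarith
end
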